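/- arXiv:1206.4073 — 5 statements merged into one kernel-verified Lean document; each statement's English description precedes it below -/
import Mathlib

section
/- Let S be a metric space, let (μ_n) be a sequence of Borel probability measures on S converging weakly to a probability measure μ, and let (f_n) be a sequence of measurable nonnegative functions f_n : S → [0,∞]. Then ∫_S liminf_{n→∞, s'→s} f_n(s') dμ(s) ≤ liminf_{n→∞} ∫_S f_n dμ_n, where liminf_{n→∞, s'→s} f_n(s') denotes the joint lower limit as n → ∞ and s' → s. -/
open MeasureTheory Filter Topology ENNReal

/-!
The joint lower limit is the increasing limit of the lower semicontinuous envelopes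
`h_N = liminf_{s' → s} inf_{m ≥ N} f_m(s')`, and `h_N ≤ f_m` for `m ≥ N`. By monotone
convergence it suffices to show `∫ h dμ ≤ liminf ∫ h dμ_n` for a lower semicontinuous `h ≥ 0`.
Its superlevel sets are open, so this follows from the portmanteau inequality
`μ G ≤ liminf μ_n G` through the layer cake formula, after truncating `h` to make it finite.
-/

section Portmanteau

variable {Ω : Type*} [MeasurableSpace Ω] [TopologicalSpace Ω] [OpensMeasurableSpace Ω]
  {μ : Measure Ω} {μs : ℕ → Measure Ω}

theorem LowerSemicontinuous.lintegral_ofReal_le_liminf_lintegral {f : Ω → ℝ}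
    (hf : LowerSemicontinuous f) (f_nn : 0 ≤ f)
    (h_opens : ∀ G, IsOpen G → μ G ≤ atTop.liminf (fun i ↦ μs i G)) :
    ∫⁻ x, ENNReal.ofReal (f x) ∂μ ≤ atTop.liminf (fun i ↦ ∫⁻ x, ENNReal.ofReal (f x) ∂(μs i)) := by
  simp_rw [lintegral_eq_lintegral_meas_lt _ (Eventually.of_forall f_nn) hf.measurable.aemeasurable]
  calc ∫⁻ t in Set.Ioi 0, μ {a | t < f a}
      ≤ ∫⁻ t in Set.Ioi 0, atTop.liminf (fun i ↦ μs i {a | t < f a}) :=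
        lintegral_mono fun t ↦ h_opens _ (hf.isOpen_preimage t)
    _ ≤ atTop.liminf (fun i ↦ ∫⁻ t in Set.Ioi 0, μs i {a | t < f a}) :=
        lintegral_liminf_le fun i ↦ Antitone.measurable fun s t hst ↦
          measure_mono fun _ hω ↦ hst.trans_lt hω

theorem LowerSemicontinuous.lintegral_le_liminf_lintegral {h : Ω → ℝ≥0∞}
    (hh : LowerSemicontinuous h)
    (h_opens : ∀ G, IsOpen G → μ G ≤ atTop.liminf (fun i ↦ μs i G)) :
    ∫⁻ x, h x ∂μ ≤ atTop.liminf (fun i ↦ ∫⁻ x, h x ∂(μs i)) := by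
  have ofReal_truncate (k : ℕ) (y : ℝ≥0∞) :
      ENNReal.ofReal (truncateToReal k y) = min (k : ℝ≥0∞) y :=
    ofReal_toReal (min_le_left _ _ |>.trans_lt (natCast_lt_top k)).ne
  have trunc_lsc (k : ℕ) : LowerSemicontinuous (truncateToReal k ∘ h) :=
    (continuous_truncateToReal (natCast_ne_top k)).comp_lowerSemicontinuous hh
      (monotone_truncateToReal (natCast_ne_top k))
  have h_eq (x : Ω) : h x = ⨆ k : ℕ, min (k : ℝ≥0∞) (h x) := by
    rw [← iSup_inf_eq, iSup_natCast, top_inf_eq]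
  calc ∫⁻ x, h x ∂μ = ⨆ k : ℕ, ∫⁻ x, ENNReal.ofReal (truncateToReal k (h x)) ∂μ := by
        simp_rw [ofReal_truncate]
        rw [← lintegral_iSup (fun k ↦ measurable_const.min hh.measurable)
          fun k l hkl x ↦ min_le_min_right _ (Nat.cast_le.mpr hkl)]
        exact lintegral_congr h_eq
    _ ≤ ⨆ k : ℕ, atTop.liminf (fun i ↦ ∫⁻ x, ENNReal.ofReal (truncateToReal k (h x)) ∂(μs i)) :=
        iSup_mono fun k ↦ (trunc_lsc k).lintegral_ofReal_le_liminf_lintegral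
          (fun _ ↦ truncateToReal_nonneg) h_opens
    _ ≤ atTop.liminf (fun i ↦ ∫⁻ x, h x ∂(μs i)) := by
        refine iSup_le fun k ↦ liminf_le_liminf (Eventually.of_forall fun i ↦ ?_)
        exact lintegral_mono fun x ↦ (ofReal_truncate k (h x)).trans_le (min_le_right _ _)

end Portmanteau

section Envelope

variable {X α : Type*} [TopologicalSpace X] [CompleteLinearOrder α]

theorem lowerSemicontinuous_liminf_nhds (F : X → α) :
    LowerSemicontinuous fun s ↦ liminf F (𝓝 s) := by
  intro s a (ha : a < liminf F (𝓝 s))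
  rw [(nhds_basis_opens s).liminf_eq_iSup_iInf] at ha
  obtain ⟨U, hU, haU⟩ : ∃ U, (s ∈ U ∧ IsOpen U) ∧ a < ⨅ y ∈ U, F y := by
    simpa only [lt_iSup_iff, exists_prop] using ha
  filter_upwards [hU.2.mem_nhds hU.1] with t ht
  rw [(nhds_basis_opens t).liminf_eq_iSup_iInf]
  exact haU.trans_le (le_iSup₂_of_le U ⟨ht, hU.2⟩ le_rfl)

theorem liminf_nhds_le_self (F : X → α) (s : X) : liminf F (𝓝 s) ≤ F s := by
  rw [(𝓝 s).basis_sets.liminf_eq_iSup_iInf]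
  exact iSup₂_le fun U hU ↦ iInf₂_le s (mem_of_mem_nhds hU)

end Envelope

theorem liminf_prod_atTop_nhds_eq_iSup {ι X α : Type*} [SemilatticeSup ι] [Nonempty ι]
    [TopologicalSpace X] [CompleteLattice α] (f : ι → X → α) (s : X) :
    liminf (fun p : ι × X ↦ f p.1 p.2) (atTop ×ˢ 𝓝 s) =
      ⨆ N, liminf (fun y ↦ ⨅ m ≥ N, f m y) (𝓝 s) := by
  rw [(atTop_basis.prod (𝓝 s).basis_sets).liminf_eq_iSup_iInf]
  simp_rw [(𝓝 s).basis_sets.liminf_eq_iSup_iInf]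
  simp only [iSup_prod, iInf_prod, Set.mem_prod, Set.mem_Ici, iInf_and, true_and]
  refine iSup_congr fun N ↦ iSup_congr fun U ↦ iSup_congr fun _ ↦ ?_
  rw [iInf_comm]
  exact iInf_congr fun y ↦ (iInf_congr fun m ↦ iInf_comm).trans iInf_comm

theorem le_liminf_measure_open_of_forall_integral_tendsto {S : Type*} [TopologicalSpace S]
    [MeasurableSpace S] [OpensMeasurableSpace S] [HasOuterApproxClosed S]
    (μs : ℕ → Measure S) (μ : Measure S)
    [∀ n, IsProbabilityMeasure (μs n)] [IsProbabilityMeasure μ]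
    (hweak : ∀ h : S → ℝ, Continuous h → (∃ C : ℝ, ∀ s, |h s| ≤ C) →
      Tendsto (fun n => ∫ s, h s ∂(μs n)) atTop (𝓝 (∫ s, h s ∂μ)))
    {G : Set S} (hG : IsOpen G) :
    μ G ≤ atTop.liminf (fun n ↦ μs n G) := by
  let P : ℕ → ProbabilityMeasure S := fun n ↦ ⟨μs n, inferInstance⟩
  let Q : ProbabilityMeasure S := ⟨μ, inferInstance⟩
  have hP : Tendsto P atTop (𝓝 Q) := by
    rw [ProbabilityMeasure.tendsto_iff_forall_integral_tendsto]
    exact fun g ↦ hweak g g.continuous ⟨‖g‖, fun s ↦ by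
      simpa only [Real.norm_eq_abs] using g.norm_coe_le_norm s⟩
  exact ProbabilityMeasure.le_liminf_measure_open_of_tendsto hP hG

theorem fatou_weak_convergence_nonneg_general
    {S : Type*} [MetricSpace S] [MeasurableSpace S] [BorelSpace S]
    (μs : ℕ → Measure S) (μ : Measure S)
    [∀ n, IsProbabilityMeasure (μs n)] [IsProbabilityMeasure μ]
    (hweak : ∀ h : S → ℝ, Continuous h → (∃ C : ℝ, ∀ s, |h s| ≤ C) →
      Tendsto (fun n => ∫ s, h s ∂(μs n)) atTop (𝓝 (∫ s, h s ∂μ)))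
    (f : ℕ → S → ℝ≥0∞) :
    ∫⁻ s, liminf (fun p : ℕ × S => f p.1 p.2) (atTop ×ˢ 𝓝 s) ∂μ ≤
      liminf (fun n => ∫⁻ s, f n s ∂(μs n)) atTop := by
  set F : ℕ → S → ℝ≥0∞ := fun N y ↦ ⨅ m ≥ N, f m y
  set h : ℕ → S → ℝ≥0∞ := fun N s ↦ liminf (F N) (𝓝 s)
  have h_lsc (N : ℕ) : LowerSemicontinuous (h N) := lowerSemicontinuous_liminf_nhds (F N)
  have h_mono : Monotone h := fun N M hNM s ↦
    liminf_le_liminf (Eventually.of_forall fun y ↦ biInf_mono fun m hm ↦ hNM.trans hm)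
  have h_le (N m : ℕ) (hNm : N ≤ m) (s : S) : h N s ≤ f m s :=
    (liminf_nhds_le_self (F N) s).trans (biInf_le _ hNm)
  calc ∫⁻ s, liminf (fun p : ℕ × S => f p.1 p.2) (atTop ×ˢ 𝓝 s) ∂μ
      = ∫⁻ s, ⨆ N, h N s ∂μ := by simp_rw [liminf_prod_atTop_nhds_eq_iSup]; rfl
    _ = ⨆ N, ∫⁻ s, h N s ∂μ := lintegral_iSup (fun N ↦ (h_lsc N).measurable) h_mono
    _ ≤ liminf (fun n => ∫⁻ s, f n s ∂(μs n)) atTop := by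
      refine iSup_le fun N ↦ ((h_lsc N).lintegral_le_liminf_lintegral
        fun G hG ↦ le_liminf_measure_open_of_forall_integral_tendsto μs μ hweak hG).trans ?_
      refine liminf_le_liminf ?_
      filter_upwards [eventually_ge_atTop N] with m hm
      exact lintegral_mono (h_le N m hm)

/-- Fatou's lemma for weakly converging probability measures and nonnegative
functions: the integral of the joint lower limit (as `n → ∞` and `s' → s`) is
at most the lower limit of the integrals. -/
theorem fatou_weak_convergence_nonneg
    {S : Type*} [MetricSpace S] [MeasurableSpace S] [BorelSpace S]
    (μs : ℕ → Measure S) (μ : Measure S)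
    [∀ n, IsProbabilityMeasure (μs n)] [IsProbabilityMeasure μ]
    (hweak : ∀ h : S → ℝ, Continuous h → (∃ C : ℝ, ∀ s, |h s| ≤ C) →
      Tendsto (fun n => ∫ s, h s ∂(μs n)) atTop (𝓝 (∫ s, h s ∂μ)))
    (f : ℕ → S → ℝ≥0∞) (hf : ∀ n, Measurable (f n)) :
    ∫⁻ s, liminf (fun p : ℕ × S => f p.1 p.2) (atTop ×ˢ 𝓝 s) ∂μ ≤
      liminf (fun n => ∫⁻ s, f n s ∂(μs n)) atTop :=
  fatou_weak_convergence_nonneg_general μs μ hweak f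
end

section
/- On S = (0,1], with μ_n(A) = √n·λ(A ∩ [1/(2n),1/n]) + (2 − 1/√n)·λ(A ∩ [1/2,1]) and μ(A) = 2λ(A ∩ [1/2,1]), and f(s) = −1/s, one has: f is continuous and μ- and μ_n-integrable for each n, ∫ f dμ = −2 ln 2, ∫ f dμ_n = −ln 2 · (√n + 2 − 1/√n), and hence ∫ f dμ > lim_{n→∞} ∫ f dμ_n = −∞. In particular Fatou's lemma for setwise (hence weakly) convergent measures fails without a lower bound condition. -/
open MeasureTheory Filter Topology ENNReal

/-- Lebesgue measure on `S = (0,1]`. -/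
noncomputable def lambdaIoc : Measure (Set.Ioc (0:ℝ) 1) :=
  (volume : Measure ℝ).comap Subtype.val

/-- `μ_n(A) = √n·λ(A ∩ [1/(2n), 1/n]) + (2 − 1/√n)·λ(A ∩ [1/2, 1])` on `S = (0,1]`. -/
noncomputable def muSeq (n : ℕ) : Measure (Set.Ioc (0:ℝ) 1) :=
  ENNReal.ofReal (Real.sqrt n) •
      lambdaIoc.restrict {s | (s : ℝ) ∈ Set.Icc (1 / (2 * (n : ℝ))) (1 / (n : ℝ))} +
    ENNReal.ofReal (2 - 1 / Real.sqrt n) •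
      lambdaIoc.restrict {s | (s : ℝ) ∈ Set.Icc (1 / 2) 1}

/-- `μ(A) = 2·λ(A ∩ [1/2, 1])` on `S = (0,1]`. -/
noncomputable def muLimit : Measure (Set.Ioc (0:ℝ) 1) :=
  (2 : ℝ≥0∞) • lambdaIoc.restrict {s | (s : ℝ) ∈ Set.Icc (1 / 2) 1}

private lemma key_aux (a b : ℝ) (ha : 0 < a) (hab : a ≤ b) (hb : b ≤ 1) :
    Integrable (fun s : Set.Ioc (0:ℝ) 1 => -(1 / (s : ℝ)))
      (lambdaIoc.restrict {s | (s : ℝ) ∈ Set.Icc a b}) ∧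
    ∫ s : Set.Ioc (0:ℝ) 1, -(1 / (s : ℝ)) ∂(lambdaIoc.restrict {s | (s : ℝ) ∈ Set.Icc a b}) =
      Real.log a - Real.log b := by
  have hsub : Set.Icc a b ⊆ Set.Ioc (0:ℝ) 1 := fun x hx => ⟨lt_of_lt_of_le ha hx.1, hx.2.trans hb⟩
  have hmeas : MeasurableSet (Set.Ioc (0:ℝ) 1) := measurableSet_Ioc
  have hset : {s : Set.Ioc (0:ℝ) 1 | (s : ℝ) ∈ Set.Icc a b} = Subtype.val ⁻¹' Set.Icc a b := rfl
  have hemb : MeasurableEmbedding (Subtype.val : Set.Ioc (0:ℝ) 1 → ℝ) :=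
    MeasurableEmbedding.subtype_coe hmeas
  have hres : lambdaIoc.restrict {s | (s : ℝ) ∈ Set.Icc a b} =
      ((volume : Measure ℝ).restrict (Set.Icc a b)).comap Subtype.val := by
    rw [hset, lambdaIoc, ← hemb.comap_restrict]
  have hIO : IntegrableOn (fun x : ℝ => -(1 / x)) (Set.Icc a b) volume := by
    apply ContinuousOn.integrableOn_compact isCompact_Icc
    apply ContinuousOn.neg
    apply ContinuousOn.div continuousOn_const continuousOn_id
    intro x hx; exact ne_of_gt (lt_of_lt_of_le ha hx.1)
  constructor
  · rw [hres]
    have hmap : Measure.map Subtype.val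
        (((volume : Measure ℝ).restrict (Set.Icc a b)).comap Subtype.val) =
        ((volume : Measure ℝ).restrict (Set.Icc a b)).restrict (Set.Ioc (0:ℝ) 1) :=
      map_comap_subtype_coe hmeas _
    have : Integrable ((fun x : ℝ => -(1/x)) ∘ (Subtype.val : Set.Ioc (0:ℝ) 1 → ℝ))
        (((volume : Measure ℝ).restrict (Set.Icc a b)).comap Subtype.val) := by
      rw [← hemb.integrable_map_iff, hmap, Measure.restrict_restrict measurableSet_Ioc,
        Set.inter_eq_right.mpr hsub]
      exact hIO
    exact this
  · rw [hres]
    rw [integral_subtype_comap hmeas (fun x : ℝ => -(1/x))]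
    rw [Measure.restrict_restrict measurableSet_Ioc, Set.inter_eq_right.mpr hsub]
    have h1 : ∫ x in Set.Icc a b, -(1/x) = ∫ x in Set.Ioc a b, -(1/x) :=
      integral_Icc_eq_integral_Ioc
    rw [h1, ← intervalIntegral.integral_of_le hab, intervalIntegral.integral_neg,
      integral_one_div]
    · rw [Real.log_div (ne_of_gt (lt_of_lt_of_le ha hab)) (ne_of_gt ha)]; ring
    · intro h
      rcases h with ⟨h1', h2'⟩
      simp only [inf_le_iff, le_sup_iff] at h1' h2'
      rcases h1' with h | h <;> linarith [ha, lt_of_lt_of_le ha hab]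

private lemma muSeq_facts (n : ℕ) (hn : 1 ≤ n) :
    Integrable (fun s : Set.Ioc (0:ℝ) 1 => -(1 / (s : ℝ))) (muSeq n) ∧
    ∫ s : Set.Ioc (0:ℝ) 1, -(1 / (s : ℝ)) ∂(muSeq n) =
      -(Real.log 2) * (Real.sqrt n + 2 - 1 / Real.sqrt n) := by
  have hn' : (1 : ℝ) ≤ (n : ℝ) := by exact_mod_cast hn
  have hn0 : (0 : ℝ) < (n : ℝ) := lt_of_lt_of_le one_pos hn'
  have ha : (0 : ℝ) < 1 / (2 * (n : ℝ)) := by positivity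
  have hab : 1 / (2 * (n : ℝ)) ≤ 1 / (n : ℝ) := by
    apply one_div_le_one_div_of_le hn0; linarith
  have hb : 1 / (n : ℝ) ≤ 1 := by
    rw [div_le_one hn0]; exact hn'
  obtain ⟨hi1, he1⟩ := key_aux _ _ ha hab hb
  obtain ⟨hi2, he2⟩ := key_aux (1/2 : ℝ) 1 (by norm_num) (by norm_num) le_rfl
  have hval1 : Real.log (1 / (2 * (n : ℝ))) - Real.log (1 / (n : ℝ)) = -Real.log 2 := by
    rw [one_div, one_div, Real.log_inv, Real.log_inv,
      Real.log_mul (by norm_num) (ne_of_gt hn0)]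
    ring
  have hval2 : Real.log (1/2 : ℝ) - Real.log 1 = -Real.log 2 := by
    rw [Real.log_one, one_div, Real.log_inv]; ring
  have hsqrt1 : (1 : ℝ) ≤ Real.sqrt n := by
    rw [show (1:ℝ) = Real.sqrt 1 from (Real.sqrt_one).symm]
    exact Real.sqrt_le_sqrt hn'
  have hc2 : (0:ℝ) ≤ 2 - 1 / Real.sqrt n := by
    have : 1 / Real.sqrt n ≤ 1 := by
      rw [div_le_one (lt_of_lt_of_le one_pos hsqrt1)]; exact hsqrt1
    linarith
  have hint1 : Integrable (fun s : Set.Ioc (0:ℝ) 1 => -(1 / (s : ℝ)))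
      (ENNReal.ofReal (Real.sqrt n) •
        lambdaIoc.restrict {s | (s : ℝ) ∈ Set.Icc (1 / (2 * (n : ℝ))) (1 / (n : ℝ))}) :=
    hi1.smul_measure ENNReal.ofReal_ne_top
  have hint2 : Integrable (fun s : Set.Ioc (0:ℝ) 1 => -(1 / (s : ℝ)))
      (ENNReal.ofReal (2 - 1 / Real.sqrt n) •
        lambdaIoc.restrict {s | (s : ℝ) ∈ Set.Icc (1/2 : ℝ) 1}) :=
    hi2.smul_measure ENNReal.ofReal_ne_top
  refine ⟨hint1.add_measure hint2, ?_⟩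
  rw [muSeq, integral_add_measure hint1 hint2, integral_smul_measure, integral_smul_measure,
    ENNReal.toReal_ofReal (Real.sqrt_nonneg _), ENNReal.toReal_ofReal hc2, he1, he2,
    hval1, hval2]
  simp only [smul_eq_mul]
  ring

/-- With `f(s) = −1/s` on `(0,1]`: `f` is continuous, integrable with respect
to `μ` and each `μ_n`, `∫ f dμ = −2 ln 2`, `∫ f dμ_n = −(ln 2)(√n + 2 − 1/√n)`
for `n ≥ 1`, and hence `∫ f dμ > lim_n ∫ f dμ_n = −∞`: Fatou's lemma for
setwise convergent measures fails without a lower-bound condition. -/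
theorem counterexample_unbounded_below :
    Continuous (fun s : Set.Ioc (0:ℝ) 1 => -(1 / (s : ℝ))) ∧
    Integrable (fun s : Set.Ioc (0:ℝ) 1 => -(1 / (s : ℝ))) muLimit ∧
    (∀ n : ℕ, 1 ≤ n →
      Integrable (fun s : Set.Ioc (0:ℝ) 1 => -(1 / (s : ℝ))) (muSeq n)) ∧
    (∫ s : Set.Ioc (0:ℝ) 1, -(1 / (s : ℝ)) ∂muLimit = -2 * Real.log 2) ∧
    (∀ n : ℕ, 1 ≤ n →
      ∫ s : Set.Ioc (0:ℝ) 1, -(1 / (s : ℝ)) ∂(muSeq n) =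
        -(Real.log 2) * (Real.sqrt n + 2 - 1 / Real.sqrt n)) ∧
    Tendsto (fun n => ∫ s : Set.Ioc (0:ℝ) 1, -(1 / (s : ℝ)) ∂(muSeq n))
      atTop atBot := by
  obtain ⟨hiL, heL⟩ := key_aux (1/2 : ℝ) 1 (by norm_num) (by norm_num) le_rfl
  have hval2 : Real.log (1/2 : ℝ) - Real.log 1 = -Real.log 2 := by
    rw [Real.log_one, one_div, Real.log_inv]; ring
  refine ⟨?_, ?_, ?_, ?_, ?_, ?_⟩
  · apply Continuous.neg
    apply Continuous.div continuous_const continuous_subtype_val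
    intro s; exact ne_of_gt s.2.1
  · exact hiL.smul_measure (by norm_num)
  · exact fun n hn => (muSeq_facts n hn).1
  · rw [muLimit, integral_smul_measure, heL, hval2]
    simp only [ENNReal.toReal_ofNat, smul_eq_mul]
    ring
  · exact fun n hn => (muSeq_facts n hn).2
  · have hsqrt : Tendsto (fun n : ℕ => Real.sqrt n) atTop atTop := by
      rw [tendsto_atTop]
      intro b
      filter_upwards [eventually_ge_atTop (Nat.ceil (b^2))] with n hn
      have hb2 : b^2 ≤ (n : ℝ) := le_trans (Nat.le_ceil _) (by exact_mod_cast hn)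
      have := Real.sqrt_le_sqrt hb2
      rw [Real.sqrt_sq_eq_abs] at this
      exact (le_abs_self b).trans this
    have hinv : Tendsto (fun n : ℕ => 2 - 1 / Real.sqrt n) atTop (𝓝 2) := by
      have h0 : Tendsto (fun n : ℕ => 1 / Real.sqrt n) atTop (𝓝 0) :=
        tendsto_const_nhds.div_atTop hsqrt
      have := ((tendsto_const_nhds : Tendsto (fun _ : ℕ => (2:ℝ)) atTop (𝓝 2)).sub h0)
      simpa using this
    have hmain : Tendsto (fun n : ℕ => -(Real.log 2) * (Real.sqrt n + 2 - 1 / Real.sqrt n))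
        atTop atBot := by
      have hAT : Tendsto (fun n : ℕ => Real.sqrt n + 2 - 1 / Real.sqrt n) atTop atTop := by
        have := hinv.add_atTop hsqrt
        apply this.congr
        intro n; ring
      exact Tendsto.neg_mul_atTop (by simpa using Real.log_pos (by norm_num)) tendsto_const_nhds hAT
    apply Tendsto.congr' _ hmain
    filter_upwards [eventually_ge_atTop 1] with n hn
    exact ((muSeq_facts n hn).2).symm
end

section
/- Let (μ_n) be probability measures on a measurable space (S, B) converging setwise to μ, and let (f_n), (g_n) be sequences of measurable extended-real-valued functions with f_n(s) ≥ g_n(s) for all n and s, each g_n real-valued. Assume all relevant integrals are defined and that −∞ < ∫_S limsup_n g_n dμ ≤ liminf_n ∫_S g_n dμ_n. Then ∫_S liminf_n f_n(s) dμ(s) ≤ liminf_n ∫_S f_n dμ_n. -/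
open MeasureTheory Filter Topology ENNReal

/-- The positive part of an extended real number, as an element of `ℝ≥0∞`. -/
noncomputable def eposPart (x : EReal) : ℝ≥0∞ :=
  if x = ⊤ then ⊤ else ENNReal.ofReal x.toReal

/-- The integral of an extended-real-valued function: `∫ f⁺ dμ − ∫ f⁻ dμ`. -/
noncomputable def eintegral {S : Type*} [MeasurableSpace S]
    (μ : MeasureTheory.Measure S) (f : S → EReal) : EReal :=
  ((∫⁻ s, eposPart (f s) ∂μ : ℝ≥0∞) : EReal) -
    ((∫⁻ s, eposPart (-f s) ∂μ : ℝ≥0∞) : EReal)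

/-- The integral of an extended-real-valued function `f` is defined when
`min(∫ f⁺ dμ, ∫ f⁻ dμ) < ∞`. -/
def EIntegralDefined {S : Type*} [MeasurableSpace S]
    (μ : MeasureTheory.Measure S) (f : S → EReal) : Prop :=
  (∫⁻ s, eposPart (f s) ∂μ) ≠ ⊤ ∨ (∫⁻ s, eposPart (-f s) ∂μ) ≠ ⊤

/-! Write `f n = g n + d n` with `d n = (f n - g n)⁺`. Pointwise
`liminf f_n ≤ limsup g_n + liminf d_n`, and since the negative part of `limsup g_n` has finite
`μ`-integral, integrating this bound splits into `∫ limsup g_n dμ + ∫ liminf d_n dμ`. The first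
term is controlled by hypothesis; the second by Fatou's lemma for setwise convergent measures,
which holds because integrals of simple functions converge setwise. Superadditivity of `liminf`
recombines the two. -/

lemma eposPart_eq_toENNReal : eposPart = EReal.toENNReal := rfl

lemma EReal.toENNReal_add_add_toENNReal_neg {x : EReal} (hx : x ≠ ⊥) (d : ℝ≥0∞) :
    (x + d).toENNReal + (-x).toENNReal = x.toENNReal + d + (-(x + d)).toENNReal := by
  induction x using EReal.rec with
  | bot => exact absurd rfl hx
  | top => simp [EReal.top_add_of_ne_bot (EReal.coe_ennreal_ne_bot d)]
  | coe l =>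
    induction d using ENNReal.recTopCoe with
    | top => simp
    | coe d =>
      rw [EReal.coe_nnreal_eq_coe_real, ← EReal.coe_add, ← EReal.coe_neg, ← EReal.coe_neg]
      simp only [EReal.real_coe_toENNReal]
      rw [← ENNReal.toReal_eq_toReal_iff' (by finiteness) (by finiteness)]
      simp only [ne_eq, ENNReal.ofReal_ne_top, not_false_eq_true, ENNReal.toReal_add,
        ENNReal.add_eq_top, ENNReal.coe_ne_top, or_self, ENNReal.coe_toReal,
        ENNReal.toReal_ofReal', max_def]
      split_ifs <;> linarith [d.2]

lemma EReal.sub_eq_sub_add_of_add_eq {a p c : EReal} {b q : ℝ} (h : a + b = p + c + q) :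
    a - q = p - b + c := by
  calc a - q = a + b - b - q := by rw [EReal.add_sub_cancel_right]
    _ = p + c + q - b - q := by rw [h]
    _ = p - b + c := by
      rw [sub_eq_add_neg (p + c + q), add_right_comm, EReal.add_sub_cancel_right, add_right_comm,
        ← sub_eq_add_neg]

lemma EReal.liminf_coe_ennreal {ι : Type*} {l : Filter ι} [l.NeBot] (u : ι → ℝ≥0∞) :
    liminf (fun i => (u i : EReal)) l = ((liminf u l : ℝ≥0∞) : EReal) :=
  (Monotone.map_liminf_of_continuousAt (fun _ _ => EReal.coe_ennreal_le_coe_ennreal_iff.2) u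
    continuous_coe_ennreal_ereal.continuousAt).symm

lemma EReal.eq_coe_add_toENNReal_sub {x : EReal} {r : ℝ} (h : (r : EReal) ≤ x) :
    x = r + ((x - r).toENNReal : EReal) := by
  rw [EReal.coe_toENNReal (EReal.sub_nonneg (.inr (EReal.coe_ne_top r))
    (.inr (EReal.coe_ne_bot r)) |>.2 h), add_comm, EReal.sub_add_cancel]

lemma EReal.liminf_add_coe_ennreal_le {ι : Type*} {l : Filter ι} [l.NeBot] {u : ι → EReal}
    {v : ι → ℝ≥0∞} (hu : limsup u l ≠ ⊥) :
    liminf (fun i => u i + v i) l ≤ limsup u l + ((liminf v l : ℝ≥0∞) : EReal) := by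
  rw [← EReal.liminf_coe_ennreal]
  exact EReal.liminf_add_le (.inl hu) (.inr <| by
    rw [EReal.liminf_coe_ennreal]; exact EReal.coe_ennreal_ne_bot _)

section eintegral

variable {S : Type*} [MeasurableSpace S] {ν : Measure S}

lemma eintegral_mono_ae {F G : S → EReal} (h : ∀ᵐ s ∂ν, F s ≤ G s) :
    eintegral ν F ≤ eintegral ν G := by
  refine EReal.sub_le_sub (EReal.coe_ennreal_le_coe_ennreal_iff.2 <| lintegral_mono_ae ?_)
    (EReal.coe_ennreal_le_coe_ennreal_iff.2 <| lintegral_mono_ae ?_)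
  · exact h.mono fun s hs => EReal.toENNReal_le_toENNReal hs
  · exact h.mono fun s hs => EReal.toENNReal_le_toENNReal (EReal.neg_le_neg_iff.2 hs)

lemma lintegral_toENNReal_neg_ne_top_of_bot_lt_eintegral {F : S → EReal}
    (h : ⊥ < eintegral ν F) : ∫⁻ s, (-F s).toENNReal ∂ν ≠ ⊤ := by
  intro htop
  rw [eintegral, eposPart_eq_toENNReal, htop, EReal.coe_ennreal_top, EReal.sub_top] at h
  exact h.false

lemma ae_ne_bot_of_lintegral_toENNReal_neg_ne_top {F : S → EReal} (hF : Measurable F)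
    (h : ∫⁻ s, (-F s).toENNReal ∂ν ≠ ⊤) : ∀ᵐ s ∂ν, F s ≠ ⊥ :=
  (ae_lt_top hF.neg.ereal_toENNReal h).mono fun s hs hbot => by simp [hbot] at hs

lemma eintegral_add_coe_ennreal {L : S → EReal} {D : S → ℝ≥0∞} (hL : Measurable L)
    (hD : Measurable D) (hL_neg : ∫⁻ s, (-L s).toENNReal ∂ν ≠ ⊤) :
    eintegral ν (fun s => L s + D s) = eintegral ν L + ∫⁻ s, D s ∂ν := by
  have hLD_neg : ∫⁻ s, (-(L s + D s)).toENNReal ∂ν ≠ ⊤ :=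
    ne_top_of_le_ne_top hL_neg <| lintegral_mono fun s => EReal.toENNReal_le_toENNReal <|
      EReal.neg_le_neg_iff.2 <| le_add_of_nonneg_right (EReal.coe_ennreal_nonneg _)
  have hsum : ∫⁻ s, (L s + D s).toENNReal ∂ν + ∫⁻ s, (-L s).toENNReal ∂ν =
      ∫⁻ s, (L s).toENNReal ∂ν + ∫⁻ s, D s ∂ν + ∫⁻ s, (-(L s + D s)).toENNReal ∂ν := by
    have hL_pos : Measurable fun s => (L s).toENNReal := hL.ereal_toENNReal
    have hL_neg_meas : Measurable fun s => (-L s).toENNReal := hL.neg.ereal_toENNReal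
    have hLD_pos : Measurable fun s => (L s).toENNReal + D s := hL_pos.add hD
    rw [← lintegral_add_right _ hL_neg_meas, ← lintegral_add_left hL_pos,
      ← lintegral_add_left hLD_pos]
    exact lintegral_congr_ae <| (ae_ne_bot_of_lintegral_toENNReal_neg_ne_top hL hL_neg).mono
      fun s hs => EReal.toENNReal_add_add_toENNReal_neg hs (D s)
  simp only [eintegral, eposPart_eq_toENNReal]
  rw [← EReal.coe_ennreal_toReal hL_neg, ← EReal.coe_ennreal_toReal hLD_neg]
  refine EReal.sub_eq_sub_add_of_add_eq ?_
  rw [EReal.coe_ennreal_toReal hL_neg, EReal.coe_ennreal_toReal hLD_neg]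
  exact_mod_cast hsum

lemma eintegral_add_lintegral_le {L : S → EReal} {D : S → ℝ≥0∞} (hL : Measurable L)
    (hD : Measurable D) :
    eintegral ν L + ∫⁻ s, D s ∂ν ≤ eintegral ν (fun s => L s + D s) := by
  by_cases hL_neg : ∫⁻ s, (-L s).toENNReal ∂ν = ⊤
  · rw [eintegral, eposPart_eq_toENNReal, hL_neg, EReal.coe_ennreal_top, EReal.sub_top,
      EReal.bot_add]
    exact bot_le
  · exact (eintegral_add_coe_ennreal hL hD hL_neg).ge

end eintegral

section setwise

variable {S ι : Type*} [MeasurableSpace S]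

def TendstoSetwise (μs : ι → Measure S) (l : Filter ι) (μ : Measure S) : Prop :=
  ∀ A, MeasurableSet A → Tendsto (fun i => μs i A) l (𝓝 (μ A))

variable {l : Filter ι} {μ : Measure S}

lemma TendstoSetwise.tendsto_lintegral_simpleFunc {μs : ι → Measure S}
    (h : TendstoSetwise μs l μ) (φ : SimpleFunc S NNReal) :
    Tendsto (fun i => ∫⁻ s, φ s ∂μs i) l (𝓝 (∫⁻ s, φ s ∂μ)) := by
  have h_eq (ν : Measure S) : ∫⁻ s, φ s ∂ν = (φ.map ((↑) : NNReal → ℝ≥0∞)).lintegral ν := by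
    rw [← SimpleFunc.lintegral_eq_lintegral, SimpleFunc.coe_map]
    rfl
  simp only [h_eq, SimpleFunc.lintegral]
  refine tendsto_finsetSum _ fun x hx => ENNReal.Tendsto.const_mul
    (h _ (SimpleFunc.measurableSet_preimage _ _)) (Or.inr ?_)
  obtain ⟨s, rfl⟩ := SimpleFunc.mem_range.1 hx
  exact ENNReal.coe_ne_top

lemma TendstoSetwise.lintegral_le_liminf [l.NeBot] {μs : ι → Measure S}
    (h : TendstoSetwise μs l μ) (F : S → ℝ≥0∞) :
    ∫⁻ s, F s ∂μ ≤ liminf (fun i => ∫⁻ s, F s ∂μs i) l := by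
  rw [lintegral_eq_nnreal]
  refine iSup₂_le fun φ hφ => ?_
  rw [← SimpleFunc.lintegral_eq_lintegral, SimpleFunc.coe_map]
  calc ∫⁻ s, φ s ∂μ = liminf (fun i => ∫⁻ s, φ s ∂μs i) l :=
        (h.tendsto_lintegral_simpleFunc φ).liminf_eq.symm
    _ ≤ liminf (fun i => ∫⁻ s, F s ∂μs i) l :=
        liminf_le_liminf (.of_forall fun i => lintegral_mono hφ)

lemma TendstoSetwise.lintegral_liminf_le {μs : ℕ → Measure S} (h : TendstoSetwise μs atTop μ)
    {F : ℕ → S → ℝ≥0∞} (hF : ∀ n, Measurable (F n)) :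
    ∫⁻ s, liminf (fun n => F n s) atTop ∂μ ≤ liminf (fun n => ∫⁻ s, F n s ∂μs n) atTop :=
  calc ∫⁻ s, liminf (fun n => F n s) atTop ∂μ = ∫⁻ s, ⨆ m, ⨅ n ≥ m, F n s ∂μ := by
        simp only [liminf_eq_iSup_iInf_of_nat]
    _ = ⨆ m, ∫⁻ s, ⨅ n ≥ m, F n s ∂μ :=
        lintegral_iSup (fun _ => .biInf _ (Set.to_countable _) fun n _ => hF n)
          fun _ _ hm s => iInf_le_iInf_of_subset fun _ hn => le_trans hm hn
    _ ≤ liminf (fun n => ∫⁻ s, F n s ∂μs n) atTop := iSup_le fun m =>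
        (h.lintegral_le_liminf _).trans <| liminf_le_liminf <|
          (eventually_ge_atTop m).mono fun n hn => lintegral_mono fun s => iInf₂_le n hn

end setwise

theorem fatou_setwise_unbounded_below_general
    {S : Type*} [MeasurableSpace S]
    (μs : ℕ → Measure S) (μ : Measure S)
    (hsetwise : ∀ A : Set S, MeasurableSet A →
      Tendsto (fun n => μs n A) atTop (𝓝 (μ A)))
    (f : ℕ → S → EReal) (hf : ∀ n, Measurable (f n))
    (g : ℕ → S → ℝ) (hg : ∀ n, Measurable (g n))
    (hfg : ∀ n s, (g n s : EReal) ≤ f n s)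
    (hbound : ⊥ < eintegral μ (fun s => limsup (fun n => (g n s : EReal)) atTop))
    (hle : eintegral μ (fun s => limsup (fun n => (g n s : EReal)) atTop) ≤
      liminf (fun n => eintegral (μs n) (fun s => (g n s : EReal))) atTop) :
    eintegral μ (fun s => liminf (fun n => f n s) atTop) ≤
      liminf (fun n => eintegral (μs n) (f n)) atTop := by
  set G : S → EReal := fun s => limsup (fun n => (g n s : EReal)) atTop
  set d : ℕ → S → ℝ≥0∞ := fun n s => (f n s - g n s).toENNReal
  have hd (n : ℕ) : Measurable (d n) := ((hf n).sub (hg n).coe_real_ereal).ereal_toENNReal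
  have hf_eq (n : ℕ) (s : S) : f n s = g n s + d n s := EReal.eq_coe_add_toENNReal_sub (hfg n s)
  have hG : Measurable G := .limsup fun n => (hg n).coe_real_ereal
  have hG_neg : ∫⁻ s, (-G s).toENNReal ∂μ ≠ ⊤ :=
    lintegral_toENNReal_neg_ne_top_of_bot_lt_eintegral hbound
  have hpt : ∀ᵐ s ∂μ, liminf (fun n => f n s) atTop ≤ G s + liminf (fun n => d n s) atTop := by
    filter_upwards [ae_ne_bot_of_lintegral_toENNReal_neg_ne_top hG hG_neg] with s hs
    simp only [hf_eq]
    exact EReal.liminf_add_coe_ennreal_le hs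
  have hfatou : ((∫⁻ s, liminf (fun n => d n s) atTop ∂μ : ℝ≥0∞) : EReal) ≤
      liminf (fun n => ((∫⁻ s, d n s ∂μs n : ℝ≥0∞) : EReal)) atTop := by
    rw [EReal.liminf_coe_ennreal]
    exact EReal.coe_ennreal_le_coe_ennreal_iff.2 (TendstoSetwise.lintegral_liminf_le hsetwise hd)
  calc eintegral μ (fun s => liminf (fun n => f n s) atTop)
      ≤ eintegral μ (fun s => G s + liminf (fun n => d n s) atTop) := eintegral_mono_ae hpt
    _ = eintegral μ G + ∫⁻ s, liminf (fun n => d n s) atTop ∂μ :=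
        eintegral_add_coe_ennreal hG (.liminf hd) hG_neg
    _ ≤ liminf (fun n => eintegral (μs n) (fun s => g n s)) atTop +
        liminf (fun n => ((∫⁻ s, d n s ∂μs n : ℝ≥0∞) : EReal)) atTop := add_le_add hle hfatou
    _ ≤ liminf (fun n => eintegral (μs n) (fun s => g n s) + ∫⁻ s, d n s ∂μs n) atTop :=
        EReal.le_liminf_add
    _ ≤ liminf (fun n => eintegral (μs n) (f n)) atTop := liminf_le_liminf <| .of_forall fun n => by
        simpa only [← hf_eq] using
          eintegral_add_lintegral_le (ν := μs n) (hg n).coe_real_ereal (hd n)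

/-- Fatou's lemma for setwise converging probability measures and functions
bounded below by functions `g_n` satisfying a uniform-integrability-type
condition (Theorem 2). -/
theorem fatou_setwise_unbounded_below
    {S : Type*} [MeasurableSpace S]
    (μs : ℕ → Measure S) (μ : Measure S)
    [∀ n, IsProbabilityMeasure (μs n)] [IsProbabilityMeasure μ]
    (hsetwise : ∀ A : Set S, MeasurableSet A →
      Tendsto (fun n => μs n A) atTop (𝓝 (μ A)))
    (f : ℕ → S → EReal) (hf : ∀ n, Measurable (f n))
    (g : ℕ → S → ℝ) (hg : ∀ n, Measurable (g n))
    (hfg : ∀ n s, (g n s : EReal) ≤ f n s)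
    (hdf : ∀ n, EIntegralDefined (μs n) (f n))
    (hdliminf : EIntegralDefined μ (fun s => liminf (fun n => f n s) atTop))
    (hdg : ∀ n, EIntegralDefined (μs n) (fun s => (g n s : EReal)))
    (hdlimsupg : EIntegralDefined μ (fun s => limsup (fun n => (g n s : EReal)) atTop))
    (hbound : ⊥ < eintegral μ (fun s => limsup (fun n => (g n s : EReal)) atTop))
    (hle : eintegral μ (fun s => limsup (fun n => (g n s : EReal)) atTop) ≤
      liminf (fun n => eintegral (μs n) (fun s => (g n s : EReal))) atTop) :
    eintegral μ (fun s => liminf (fun n => f n s) atTop) ≤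
      liminf (fun n => eintegral (μs n) (f n)) atTop :=
  fatou_setwise_unbounded_below_general μs μ hsetwise f hf g hg hfg hbound hle
end

section
/- Let (k_n) be an increasing sequence of positive integers with k_n/(k_n+1) ∉ {x_1,...,x_n} for each n, where {x_i} is an enumeration of ℚ. Then on S = ℚ, the Dirac measures μ_n = δ_{k_n/(k_n+1)} converge weakly to μ = δ_1, and with f_n = g_n = −n·1{s ∈ {x_1,...,x_n}}, the condition −∞ < ∫_S limsup_{n→∞, s'→s} g_n(s') dμ ≤ liminf_n ∫_S g_n dμ_n holds (both sides equal 0), even though no real-valued function g with g ≤ f_n for all n exists (any such g ≡ −∞). -/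
open MeasureTheory Filter Topology ENNReal
open scoped Classical

theorem coe_eposPart_sub_eposPart_neg (x : EReal) :
    (eposPart x : EReal) - eposPart (-x) = x := by
  induction x using EReal.rec with
  | bot => simp [eposPart]
  | top => simp [eposPart]
  | coe r =>
    rcases le_total 0 r with hr | hr
    · simp [eposPart, ← EReal.coe_neg, ENNReal.ofReal_of_nonpos (neg_nonpos.mpr hr), hr]
    · simp [eposPart, ← EReal.coe_neg, ENNReal.ofReal_of_nonpos hr, max_eq_left (neg_nonneg.mpr hr)]

theorem eintegral_dirac {S : Type*} [MeasurableSpace S] [MeasurableSingletonClass S]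
    (a : S) (f : S → EReal) : eintegral (Measure.dirac a) f = f a := by
  rw [eintegral, lintegral_dirac, lintegral_dirac, coe_eposPart_sub_eposPart_neg]

theorem tendsto_integral_dirac_of_tendsto {ι X E : Type*} [TopologicalSpace X]
    [MeasurableSpace X] [MeasurableSingletonClass X] [NormedAddCommGroup E] [NormedSpace ℝ E]
    [CompleteSpace E]
    {l : Filter ι} {a : ι → X} {b : X} (ha : Tendsto a l (𝓝 b)) {h : X → E}
    (hh : ContinuousAt h b) :
    Tendsto (fun i => ∫ s, h s ∂Measure.dirac (a i)) l (𝓝 (∫ s, h s ∂Measure.dirac b)) := by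
  simp only [integral_dirac]
  exact hh.tendsto.comp ha

theorem limsup_prod_nhds_eq_of_le_of_tendsto {ι X β : Type*} [TopologicalSpace X]
    [CompleteLattice β] {l : Filter ι} [l.NeBot] {F : ι → X → β} {b : β} {s : X} {q : ι → X}
    (hq : Tendsto q l (𝓝 s)) (hle : ∀ i y, F i y ≤ b) (hattained : ∀ i, F i (q i) = b) :
    limsup (fun p : ι × X => F p.1 p.2) (l ×ˢ 𝓝 s) = b := by
  refine le_antisymm (limsup_le_of_le (by isBoundedDefault) (.of_forall fun p => hle p.1 p.2)) ?_
  calc b = limsup (fun i => F i (q i)) l := by simp only [hattained, limsup_const]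
    _ ≤ _ := (tendsto_id.prodMk hq).limsup_comp_le_limsup (u := fun p : ι × X => F p.1 p.2)

theorem rational_example_theorem3_applies_general
    (x : ℕ → ℚ)
    (k : ℕ → ℕ) (hk : StrictMono k)
    (hknotin : ∀ n, ∀ i, 1 ≤ i → i ≤ n →
      x i ≠ ((k n : ℚ) / ((k n : ℚ) + 1)))
    (f : ℕ → ℚ → EReal)
    (hf : ∀ n s, f n s =
      if ∃ i, 1 ≤ i ∧ i ≤ n ∧ x i = s then (-(n : ℝ) : EReal) else 0) :
    (∀ h : ℚ → ℝ, Continuous h → (∃ C : ℝ, ∀ s, |h s| ≤ C) →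
      Tendsto (fun n => ∫ s, h s ∂(Measure.dirac ((k n : ℚ) / ((k n : ℚ) + 1))))
        atTop (𝓝 (∫ s, h s ∂(Measure.dirac (1 : ℚ))))) ∧
    eintegral (Measure.dirac (1 : ℚ))
      (fun s => limsup (fun p : ℕ × ℚ => f p.1 p.2) (atTop ×ˢ 𝓝 s)) = 0 ∧
    liminf (fun n =>
      eintegral (Measure.dirac ((k n : ℚ) / ((k n : ℚ) + 1))) (f n)) atTop = 0 ∧
    ¬∃ g : ℚ → ℝ, ∀ n s, (g s : EReal) ≤ f n s := by
  have hq : Tendsto (fun n => (k n : ℚ) / ((k n : ℚ) + 1)) atTop (𝓝 1) :=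
    (tendsto_natCast_div_add_atTop (1 : ℚ)).comp hk.tendsto_atTop
  have hf_nonpos : ∀ n s, f n s ≤ 0 := fun n s => by
    rw [hf]
    split_ifs
    · exact_mod_cast neg_nonpos.mpr n.cast_nonneg
    · exact le_rfl
  have hf_along : ∀ n, f n ((k n : ℚ) / ((k n : ℚ) + 1)) = 0 := fun n => by
    rw [hf, if_neg]
    rintro ⟨i, hi₁, hin, hxi⟩
    exact hknotin n i hi₁ hin hxi
  refine ⟨fun h hh _ => tendsto_integral_dirac_of_tendsto hq hh.continuousAt, ?_, ?_, ?_⟩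
  · rw [eintegral_dirac, limsup_prod_nhds_eq_of_le_of_tendsto hq hf_nonpos hf_along]
  · simp only [eintegral_dirac, hf_along, liminf_const]
  · rintro ⟨g, hg⟩
    obtain ⟨n, hn⟩ := exists_nat_gt (-g (x 1))
    have hgn := hg (n + 1) (x 1)
    rw [hf, if_pos ⟨1, le_rfl, by omega, rfl⟩, ← EReal.coe_neg, EReal.coe_le_coe_iff] at hgn
    push_cast at hgn
    linarith

/-- On `S = ℚ`, with `μ_n = δ_{k_n/(k_n+1)}` where `k_n/(k_n+1) ∉ {x_1,…,x_n}`
and `f_n = g_n = −n·1{s ∈ {x_1,…,x_n}}`: the `μ_n` converge weakly to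
`μ = δ_1`, the condition `−∞ < ∫ limsup_{n,s'→s} g_n dμ ≤ liminf_n ∫ g_n dμ_n`
holds (both sides equal `0`), yet no real-valued function `g` with
`g ≤ f_n` for all `n` exists. -/
theorem rational_example_theorem3_applies
    (x : ℕ → ℚ) (hx : Function.Bijective x)
    (k : ℕ → ℕ) (hk : StrictMono k) (hkpos : ∀ n, 0 < k n)
    (hknotin : ∀ n, ∀ i, 1 ≤ i → i ≤ n →
      x i ≠ ((k n : ℚ) / ((k n : ℚ) + 1)))
    (f : ℕ → ℚ → EReal)
    (hf : ∀ n s, f n s =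
      if ∃ i, 1 ≤ i ∧ i ≤ n ∧ x i = s then (-(n : ℝ) : EReal) else 0) :
    (∀ h : ℚ → ℝ, Continuous h → (∃ C : ℝ, ∀ s, |h s| ≤ C) →
      Tendsto (fun n => ∫ s, h s ∂(Measure.dirac ((k n : ℚ) / ((k n : ℚ) + 1))))
        atTop (𝓝 (∫ s, h s ∂(Measure.dirac (1 : ℚ))))) ∧
    eintegral (Measure.dirac (1 : ℚ))
      (fun s => limsup (fun p : ℕ × ℚ => f p.1 p.2) (atTop ×ˢ 𝓝 s)) = 0 ∧
    liminf (fun n =>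
      eintegral (Measure.dirac ((k n : ℚ) / ((k n : ℚ) + 1))) (f n)) atTop = 0 ∧
    ¬∃ g : ℚ → ℝ, ∀ n s, (g s : EReal) ≤ f n s :=
  rational_example_theorem3_applies_general x k hk hknotin f hf
end

section
/- Let (μ_n) be probability measures on a measurable space (S,B) converging setwise to μ and let (f_n) be measurable nonnegative extended-real-valued functions. Then ∫_S liminf_{n→∞} f_n(s) dμ(s) ≤ liminf_{n→∞} ∫_S f_n dμ_n. -/
open MeasureTheory Filter Topology ENNReal

/-- For a fixed simple function, its lintegral against the limit measure is at most the
liminf of its lintegrals against the setwise-converging measures. -/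
lemma simpleFunc_lintegral_le_liminf
    {S : Type*} [MeasurableSpace S]
    (μs : ℕ → Measure S) (μ : Measure S)
    (hsetwise : ∀ A : Set S, MeasurableSet A →
      Tendsto (fun n => μs n A) atTop (𝓝 (μ A)))
    (φ : SimpleFunc S ℝ≥0∞) :
    φ.lintegral μ ≤ liminf (fun n => φ.lintegral (μs n)) atTop := by
  classical
  set G : Finset ℝ≥0∞ := φ.range.filter
      (fun x => x ≠ ∞ ∨ μ (φ ⁻¹' {x}) ≠ 0) with hG
  have hgood : Tendsto (fun n => ∑ x ∈ G, x * μs n (φ ⁻¹' {x})) atTop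
      (𝓝 (∑ x ∈ G, x * μ (φ ⁻¹' {x}))) := by
    refine tendsto_finset_sum _ (fun x hx => ?_)
    have hx' := (Finset.mem_filter.mp hx).2
    exact ENNReal.Tendsto.const_mul (hsetwise _ (φ.measurableSet_preimage _))
      (by tauto)
  have hsum_eq : φ.lintegral μ = ∑ x ∈ G, x * μ (φ ⁻¹' {x}) := by
    rw [SimpleFunc.lintegral]
    refine (Finset.sum_subset (Finset.filter_subset _ _) ?_).symm
    intro x hx hxG
    have : x = ∞ ∧ μ (φ ⁻¹' {x}) = 0 := by
      by_contra h
      exact hxG (Finset.mem_filter.mpr ⟨hx, by tauto⟩)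
    simp [this.2]
  have hle : ∀ n, ∑ x ∈ G, x * μs n (φ ⁻¹' {x}) ≤ φ.lintegral (μs n) := by
    intro n
    rw [SimpleFunc.lintegral]
    exact Finset.sum_le_sum_of_subset (Finset.filter_subset _ _)
  rw [hsum_eq]
  exact hgood.liminf_eq ▸ liminf_le_liminf (Eventually.of_forall hle)

/-- Lower semicontinuity of the lintegral of a fixed nonnegative measurable function
along setwise convergence of probability measures. -/
lemma lintegral_le_liminf_of_setwise
    {S : Type*} [MeasurableSpace S]
    (μs : ℕ → Measure S) (μ : Measure S)
    (hsetwise : ∀ A : Set S, MeasurableSet A →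
      Tendsto (fun n => μs n A) atTop (𝓝 (μ A)))
    {h : S → ℝ≥0∞} (hh : Measurable h) :
    ∫⁻ s, h s ∂μ ≤ liminf (fun n => ∫⁻ s, h s ∂(μs n)) atTop := by
  rw [lintegral_eq_iSup_eapprox_lintegral hh]
  refine iSup_le fun k => ?_
  refine le_trans (simpleFunc_lintegral_le_liminf μs μ hsetwise _) ?_
  refine liminf_le_liminf (Eventually.of_forall fun n => ?_)
  rw [← SimpleFunc.lintegral_eq_lintegral]
  exact lintegral_mono fun s => (le_iSup (fun m => SimpleFunc.eapprox h m s) k).trans (SimpleFunc.iSup_eapprox_apply hh s).le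

/-- Fatou's lemma for setwise converging probability measures and nonnegative
functions (Royden): `∫ liminf_n f_n dμ ≤ liminf_n ∫ f_n dμ_n`. -/
theorem fatou_setwise_nonneg
    {S : Type*} [MeasurableSpace S]
    (μs : ℕ → Measure S) (μ : Measure S)
    [∀ n, IsProbabilityMeasure (μs n)] [IsProbabilityMeasure μ]
    (hsetwise : ∀ A : Set S, MeasurableSet A →
      Tendsto (fun n => μs n A) atTop (𝓝 (μ A)))
    (f : ℕ → S → ℝ≥0∞) (hf : ∀ n, Measurable (f n)) :
    ∫⁻ s, liminf (fun n => f n s) atTop ∂μ ≤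
      liminf (fun n => ∫⁻ s, f n s ∂(μs n)) atTop := by
  set g : ℕ → S → ℝ≥0∞ := fun k s => ⨅ i, ⨅ _ : i ≥ k, f i s with hg
  have hgmeas : ∀ k, Measurable (g k) := fun k =>
    Measurable.iInf fun i => Measurable.iInf fun _ => hf i
  have hgmono : Monotone g := by
    intro a b hab s
    exact le_iInf₂ fun i hi => iInf₂_le i (le_trans hab hi)
  have h1 : ∫⁻ s, liminf (fun n => f n s) atTop ∂μ = ⨆ k, ∫⁻ s, g k s ∂μ := by
    rw [← lintegral_iSup hgmeas hgmono]
    congr 1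
    ext s
    exact liminf_eq_iSup_iInf_of_nat
  rw [h1]
  refine iSup_le fun k => ?_
  refine le_trans (lintegral_le_liminf_of_setwise μs μ hsetwise (hgmeas k)) ?_
  refine liminf_le_liminf ?_
  filter_upwards [eventually_ge_atTop k] with n hn
  exact lintegral_mono fun s => iInf₂_le n hn
end
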